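/- arXiv:0903.1783 — 2 statements merged into one kernel-verified Lean document; each statement's English description precedes it below -/
import Mathlib

section
/- Let φ : ℂ^n → ℝ be a C^2 plurisubharmonic function whose lowest Levi eigenvalue λ_φ satisfies λ_φ(z) ≥ ε > 0 for all z. Then for every (0,1)-form u with coefficients in C_0^∞(ℂ^n), ε‖u‖²_φ ≤ ‖∂̄u‖²_φ + ‖∂̄*_φ u‖²_φ. -/
open MeasureTheory Filter Complex

noncomputable section

/-- The `j`-th real coordinate direction in `ℂⁿ`. -/
def dirx (n : ℕ) (j : Fin n) : Fin n → ℂ := fun k => if k = j then 1 else 0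
/-- The `j`-th imaginary coordinate direction in `ℂⁿ`. -/
def diry (n : ℕ) (j : Fin n) : Fin n → ℂ := fun k => if k = j then Complex.I else 0
/-- Partial derivative `∂/∂x_j`. -/
def pdx {n : ℕ} (f : (Fin n → ℂ) → ℂ) (j : Fin n) (z : Fin n → ℂ) : ℂ := fderiv ℝ f z (dirx n j)
/-- Partial derivative `∂/∂y_j`. -/
def pdy {n : ℕ} (f : (Fin n → ℂ) → ℂ) (j : Fin n) (z : Fin n → ℂ) : ℂ := fderiv ℝ f z (diry n j)
/-- Wirtinger derivative `∂/∂z_j`. -/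
def wdz {n : ℕ} (f : (Fin n → ℂ) → ℂ) (j : Fin n) (z : Fin n → ℂ) : ℂ :=
  (pdx f j z - Complex.I * pdy f j z) / 2
/-- Wirtinger derivative `∂/∂z̄_j`. -/
def wdzbar {n : ℕ} (f : (Fin n → ℂ) → ℂ) (j : Fin n) (z : Fin n → ℂ) : ℂ :=
  (pdx f j z + Complex.I * pdy f j z) / 2
/-- A real-valued function viewed as complex-valued. -/
def cplx {n : ℕ} (φ : (Fin n → ℂ) → ℝ) : (Fin n → ℂ) → ℂ := fun z => (φ z : ℂ)
/-- The Levi matrix `(∂²φ/∂z_j∂z̄_k)_{j,k}`. -/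
def Levi {n : ℕ} (φ : (Fin n → ℂ) → ℝ) (z : Fin n → ℂ) : Matrix (Fin n) (Fin n) ℂ :=
  fun j k => wdz (fun w => wdzbar (cplx φ) k w) j z
/-- The twisted derivative `δ_j f = ∂f/∂z_j − (∂φ/∂z_j) f`. -/
def tdel {n : ℕ} (φ : (Fin n → ℂ) → ℝ) (j : Fin n) (f : (Fin n → ℂ) → ℂ) (z : Fin n → ℂ) : ℂ :=
  wdz f j z - wdz (cplx φ) j z * f z
/-- `∂φ/∂x_j` for a real-valued function. -/
def rpdx {n : ℕ} (φ : (Fin n → ℂ) → ℝ) (j : Fin n) (z : Fin n → ℂ) : ℝ := fderiv ℝ φ z (dirx n j)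
/-- `∂φ/∂y_j` for a real-valued function. -/
def rpdy {n : ℕ} (φ : (Fin n → ℂ) → ℝ) (j : Fin n) (z : Fin n → ℂ) : ℝ := fderiv ℝ φ z (diry n j)
/-- The real Laplacian `Δφ`. -/
def rlap {n : ℕ} (φ : (Fin n → ℂ) → ℝ) (z : Fin n → ℂ) : ℝ :=
  ∑ j, (rpdx (fun w => rpdx φ j w) j z + rpdy (fun w => rpdy φ j w) j z)
/-- `|∇φ|²`. -/
def gradsq {n : ℕ} (φ : (Fin n → ℂ) → ℝ) (z : Fin n → ℂ) : ℝ :=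
  ∑ j, ((rpdx φ j z) ^ 2 + (rpdy φ j z) ^ 2)
/-- `X_j = ∂/∂x_j − ∂φ/∂x_j`. -/
def Xop {n : ℕ} (φ : (Fin n → ℂ) → ℝ) (j : Fin n) (f : (Fin n → ℂ) → ℂ) (z : Fin n → ℂ) : ℂ :=
  pdx f j z - (rpdx φ j z : ℂ) * f z
/-- `Y_j = ∂/∂y_j − ∂φ/∂y_j`. -/
def Yop {n : ℕ} (φ : (Fin n → ℂ) → ℝ) (j : Fin n) (f : (Fin n → ℂ) → ℂ) (z : Fin n → ℂ) : ℂ :=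
  pdy f j z - (rpdy φ j z : ℂ) * f z
/-- The weighted measure `e^{-φ} dλ`. -/
def μw {n : ℕ} (φ : (Fin n → ℂ) → ℝ) : Measure (Fin n → ℂ) :=
  volume.withDensity fun z => ENNReal.ofReal (Real.exp (-(φ z)))
/-- A test function: smooth with compact support. -/
def IsTest {n : ℕ} (χ : (Fin n → ℂ) → ℂ) : Prop := ContDiff ℝ (⊤ : ℕ∞) χ ∧ HasCompactSupport χ

section Helpers
variable {n : ℕ}

lemma mkh_integral_fderiv (F : (Fin n → ℂ) → ℂ) (hF : ContDiff ℝ 1 F)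
    (hc : HasCompactSupport F) (v : Fin n → ℂ) : ∫ z, fderiv ℝ F z v = 0 := by
  have hcont : Continuous fun z => fderiv ℝ F z v :=
    ((hF.fderiv_right (m := 0) le_rfl).continuous).clm_apply continuous_const
  have h := integral_mul_fderiv_eq_neg_fderiv_mul_of_integrable (μ := volume)
    (f := fun _ => (1:ℂ)) (g := F) (v := v) ?_ ?_ ?_ (fun x _ => (differentiable_const (1:ℂ)) x)
    (fun x _ => (hF.differentiable one_ne_zero) x)
  · simpa using h
  · simp
  · simpa using hcont.integrable_of_hasCompactSupport (hc.fderiv_apply ℝ v)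
  · simpa using hF.continuous.integrable_of_hasCompactSupport hc

lemma mkh_fderiv_mul {f g : (Fin n → ℂ) → ℂ} {z v : Fin n → ℂ}
    (hf : DifferentiableAt ℝ f z) (hg : DifferentiableAt ℝ g z) :
    fderiv ℝ (fun w => f w * g w) z v = fderiv ℝ f z v * g z + f z * fderiv ℝ g z v := by
  rw [fderiv_fun_mul hf hg]
  simp [add_comm, mul_comm]

lemma mkh_fderiv_conj (g : (Fin n → ℂ) → ℂ) (z v : Fin n → ℂ) :
    fderiv ℝ (fun w => (starRingEnd ℂ) (g w)) z v = (starRingEnd ℂ) (fderiv ℝ g z v) := by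
  have : (fun w => (starRingEnd ℂ) (g w)) = ⇑Complex.conjCLE ∘ g := rfl
  rw [this, Complex.conjCLE.comp_fderiv]
  rfl

lemma mkh_fderiv_ofReal {r : (Fin n → ℂ) → ℝ} {z v : Fin n → ℂ}
    (hr : DifferentiableAt ℝ r z) :
    fderiv ℝ (fun w => ((r w : ℝ) : ℂ)) z v = ((fderiv ℝ r z v : ℝ) : ℂ) := by
  have := (Complex.ofRealCLM.hasFDerivAt.comp z hr.hasFDerivAt).fderiv
  rw [show (fun w => ((r w : ℝ) : ℂ)) = ⇑Complex.ofRealCLM ∘ r from rfl, this]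
  rfl

lemma mkh_fderiv_exp_neg {φ : (Fin n → ℂ) → ℝ} {z v : Fin n → ℂ}
    (hφ : DifferentiableAt ℝ φ z) :
    fderiv ℝ (fun w => Real.exp (-(φ w))) z v = -(fderiv ℝ φ z v) * Real.exp (-(φ z)) := by
  have h1 : HasFDerivAt (fun w => -(φ w)) (-(fderiv ℝ φ z)) z := hφ.hasFDerivAt.neg
  have h2 := (Real.hasDerivAt_exp (-(φ z))).comp_hasFDerivAt z h1
  have h3 : HasFDerivAt (fun w => Real.exp (-(φ w)))
      (Real.exp (-(φ z)) • -fderiv ℝ φ z) z := h2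
  rw [h3.fderiv]
  simp [mul_comm]

end Helpers
section Helpers2
variable {n : ℕ}

lemma mkh_contDiff_pd {m N : WithTop ℕ∞} {f : (Fin n → ℂ) → ℂ}
    (hf : ContDiff ℝ N f) (h : m + 1 ≤ N) (v : Fin n → ℂ) :
    ContDiff ℝ m (fun z => fderiv ℝ f z v) :=
  (hf.fderiv_right h).clm_apply contDiff_const

lemma mkh_contDiff_wdz {m N : WithTop ℕ∞} {f : (Fin n → ℂ) → ℂ}
    (hf : ContDiff ℝ N f) (h : m + 1 ≤ N) (j : Fin n) :
    ContDiff ℝ m (fun z => wdz f j z) := by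
  unfold wdz pdx pdy
  exact ((mkh_contDiff_pd hf h _).sub
    (contDiff_const.mul (mkh_contDiff_pd hf h _))).div_const _

lemma mkh_contDiff_wdzbar {m N : WithTop ℕ∞} {f : (Fin n → ℂ) → ℂ}
    (hf : ContDiff ℝ N f) (h : m + 1 ≤ N) (j : Fin n) :
    ContDiff ℝ m (fun z => wdzbar f j z) := by
  unfold wdzbar pdx pdy
  exact ((mkh_contDiff_pd hf h _).add
    (contDiff_const.mul (mkh_contDiff_pd hf h _))).div_const _

lemma mkh_contDiff_cplx {m : WithTop ℕ∞} {φ : (Fin n → ℂ) → ℝ}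
    (hφ : ContDiff ℝ m φ) : ContDiff ℝ m (cplx φ) :=
  Complex.ofRealCLM.contDiff.comp hφ

lemma mkh_contDiff_tdel {m N : WithTop ℕ∞} {φ : (Fin n → ℂ) → ℝ} {f : (Fin n → ℂ) → ℂ}
    (hφ : ContDiff ℝ N φ) (hf : ContDiff ℝ N f) (h : m + 1 ≤ N) (j : Fin n) :
    ContDiff ℝ m (fun z => tdel φ j f z) := by
  unfold tdel
  exact (mkh_contDiff_wdz hf h j).sub
    ((mkh_contDiff_wdz (mkh_contDiff_cplx hφ) h j).mul (hf.of_le (le_trans le_self_add h)))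

lemma mkh_supp_sub {f g : (Fin n → ℂ) → ℂ} (h1 : HasCompactSupport f)
    (h2 : HasCompactSupport g) : HasCompactSupport (fun z => f z - g z) := by
  have : (fun z => f z - g z) = f + (-g) := by funext z; simp [sub_eq_add_neg]
  rw [this]
  exact h1.add h2.neg

lemma mkh_supp_pd {f : (Fin n → ℂ) → ℂ} (hc : HasCompactSupport f) (v : Fin n → ℂ) :
    HasCompactSupport (fun z => fderiv ℝ f z v) := hc.fderiv_apply ℝ v

lemma mkh_supp_wdz {f : (Fin n → ℂ) → ℂ} (hc : HasCompactSupport f) (j : Fin n) :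
    HasCompactSupport (fun z => wdz f j z) := by
  unfold wdz pdx pdy
  simp only [div_eq_mul_inv]
  exact (mkh_supp_sub (mkh_supp_pd hc _) ((mkh_supp_pd hc _).mul_left)).mul_right

lemma mkh_supp_wdzbar {f : (Fin n → ℂ) → ℂ} (hc : HasCompactSupport f) (j : Fin n) :
    HasCompactSupport (fun z => wdzbar f j z) := by
  unfold wdzbar pdx pdy
  simp only [div_eq_mul_inv]
  exact ((mkh_supp_pd hc _).add ((mkh_supp_pd hc _).mul_left)).mul_right

lemma mkh_supp_tdel {φ : (Fin n → ℂ) → ℝ} {f : (Fin n → ℂ) → ℂ}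
    (hc : HasCompactSupport f) (j : Fin n) :
    HasCompactSupport (fun z => tdel φ j f z) := by
  unfold tdel
  exact mkh_supp_sub (mkh_supp_wdz hc j) hc.mul_left

end Helpers2
section Helpers3
variable {n : ℕ}

lemma mkh_wdz_mul {f g : (Fin n → ℂ) → ℂ} {z : Fin n → ℂ} {j : Fin n}
    (hf : DifferentiableAt ℝ f z) (hg : DifferentiableAt ℝ g z) :
    wdz (fun w => f w * g w) j z = wdz f j z * g z + f z * wdz g j z := by
  simp only [wdz, pdx, pdy, mkh_fderiv_mul hf hg]
  ring

lemma mkh_wdzbar_mul {f g : (Fin n → ℂ) → ℂ} {z : Fin n → ℂ} {j : Fin n}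
    (hf : DifferentiableAt ℝ f z) (hg : DifferentiableAt ℝ g z) :
    wdzbar (fun w => f w * g w) j z = wdzbar f j z * g z + f z * wdzbar g j z := by
  simp only [wdzbar, pdx, pdy, mkh_fderiv_mul hf hg]
  ring

lemma mkh_wdz_conj (g : (Fin n → ℂ) → ℂ) (z : Fin n → ℂ) (j : Fin n) :
    wdz (fun w => (starRingEnd ℂ) (g w)) j z = (starRingEnd ℂ) (wdzbar g j z) := by
  simp only [wdz, wdzbar, pdx, pdy, mkh_fderiv_conj, map_add, map_div₀, map_mul,
    Complex.conj_I, map_ofNat]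
  ring

lemma mkh_wdzbar_sub {f g : (Fin n → ℂ) → ℂ} {z : Fin n → ℂ} {j : Fin n}
    (hf : DifferentiableAt ℝ f z) (hg : DifferentiableAt ℝ g z) :
    wdzbar (fun w => f w - g w) j z = wdzbar f j z - wdzbar g j z := by
  simp only [wdzbar, pdx, pdy, fderiv_fun_sub hf hg, ContinuousLinearMap.sub_apply]
  ring

lemma mkh_wdz_expneg {φ : (Fin n → ℂ) → ℝ} {z : Fin n → ℂ} (j : Fin n)
    (hφ : DifferentiableAt ℝ φ z) :
    wdz (fun w => ((Real.exp (-(φ w)) : ℝ) : ℂ)) j z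
      = -(wdz (cplx φ) j z) * Real.exp (-(φ z)) := by
  have hr : DifferentiableAt ℝ (fun w => Real.exp (-(φ w))) z := hφ.neg.exp
  have hc : ∀ v, fderiv ℝ (cplx φ) z v = ((fderiv ℝ φ z v : ℝ) : ℂ) :=
    fun v => mkh_fderiv_ofReal hφ
  simp only [wdz, pdx, pdy]
  rw [mkh_fderiv_ofReal hr, mkh_fderiv_ofReal hr, hc, hc,
    mkh_fderiv_exp_neg hφ, mkh_fderiv_exp_neg hφ]
  push_cast
  ring

lemma mkh_snd_comm {f : (Fin n → ℂ) → ℂ} {z : Fin n → ℂ} (hf : ContDiff ℝ 2 f)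
    (v w : Fin n → ℂ) :
    fderiv ℝ (fun y => fderiv ℝ f y v) z w = fderiv ℝ (fun y => fderiv ℝ f y w) z v := by
  have hd : DifferentiableAt ℝ (fderiv ℝ f) z :=
    ((hf.fderiv_right (m := 1) le_rfl).differentiable one_ne_zero) z
  have key : ∀ a b : Fin n → ℂ,
      fderiv ℝ (fun y => fderiv ℝ f y a) z b = fderiv ℝ (fderiv ℝ f) z b a := by
    intro a b
    rw [fderiv_clm_apply hd (differentiableAt_const a)]
    simp
  rw [key, key, (hf.contDiffAt.isSymmSndFDerivAt (by simp [minSmoothness_of_isRCLikeNormedField])).eq]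

lemma mkh_fderiv_combo {a b : (Fin n → ℂ) → ℂ} {z v : Fin n → ℂ}
    (ha : DifferentiableAt ℝ a z) (hb : DifferentiableAt ℝ b z) (c : ℂ) :
    fderiv ℝ (fun w => (a w + c * b w) / 2) z v
      = (fderiv ℝ a z v + c * fderiv ℝ b z v) / 2 := by
  have h1 : (fun w => (a w + c * b w) / 2)
      = fun w => (2⁻¹ : ℂ) * a w + (c / 2) * b w := by funext w; ring
  have h2 := ((ha.hasFDerivAt.const_mul (2⁻¹ : ℂ)).fun_add
    (hb.hasFDerivAt.const_mul (c / 2))).fderiv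
  rw [h1, h2]
  simp only [ContinuousLinearMap.add_apply, ContinuousLinearMap.coe_smul',
    Pi.smul_apply, smul_eq_mul]
  ring

lemma mkh_mixed_comm {f : (Fin n → ℂ) → ℂ} {z : Fin n → ℂ} (hf : ContDiff ℝ 2 f)
    (j k : Fin n) :
    wdzbar (fun w => wdz f j w) k z = wdz (fun w => wdzbar f k w) j z := by
  have hpd : ∀ v : Fin n → ℂ, DifferentiableAt ℝ (fun w => fderiv ℝ f w v) z :=
    fun v => ((mkh_contDiff_pd hf (by norm_num) v).differentiable one_ne_zero) z
  have e1 : (fun w => wdz f j w)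
      = fun w => (fderiv ℝ f w (dirx n j) + (-Complex.I) * fderiv ℝ f w (diry n j)) / 2 := by
    funext w; simp only [wdz, pdx, pdy]; ring
  have e2 : (fun w => wdzbar f k w)
      = fun w => (fderiv ℝ f w (dirx n k) + Complex.I * fderiv ℝ f w (diry n k)) / 2 := by
    funext w; simp only [wdzbar, pdx, pdy]
  rw [e1, e2]
  simp only [wdz, wdzbar, pdx, pdy,
    mkh_fderiv_combo (hpd _) (hpd _) (-Complex.I),
    mkh_fderiv_combo (hpd _) (hpd _) Complex.I]
  rw [mkh_snd_comm hf (dirx n j) (dirx n k), mkh_snd_comm hf (dirx n j) (diry n k),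
    mkh_snd_comm hf (diry n j) (dirx n k), mkh_snd_comm hf (diry n j) (diry n k)]
  ring

end Helpers3
section Helpers4
variable {n : ℕ}

lemma mkh_comm {φ : (Fin n → ℂ) → ℝ} {f : (Fin n → ℂ) → ℂ}
    (hφ : ContDiff ℝ 2 φ) (hf : ContDiff ℝ 2 f) (j k : Fin n) (z : Fin n → ℂ) :
    wdzbar (fun w => tdel φ j f w) k z
      = tdel φ j (fun w => wdzbar f k w) z - Levi φ z j k * f z := by
  have hφc : ContDiff ℝ 2 (cplx φ) := mkh_contDiff_cplx hφ
  have hdwf : DifferentiableAt ℝ (fun w => wdz f j w) z :=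
    ((mkh_contDiff_wdz hf (by norm_num) j).differentiable one_ne_zero) z
  have hdwφ : DifferentiableAt ℝ (fun w => wdz (cplx φ) j w) z :=
    ((mkh_contDiff_wdz hφc (by norm_num) j).differentiable one_ne_zero) z
  have hdf : DifferentiableAt ℝ f z := (hf.differentiable (by norm_num)) z
  have step1 : wdzbar (fun w => tdel φ j f w) k z
      = wdzbar (fun w => wdz f j w) k z - wdzbar (fun w => wdz (cplx φ) j w * f w) k z := by
    exact mkh_wdzbar_sub hdwf (hdwφ.mul hdf)
  have step2 : wdzbar (fun w => wdz (cplx φ) j w * f w) k z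
      = wdzbar (fun w => wdz (cplx φ) j w) k z * f z + wdz (cplx φ) j z * wdzbar f k z :=
    mkh_wdzbar_mul hdwφ hdf
  rw [step1, step2, mkh_mixed_comm hf j k, mkh_mixed_comm hφc j k]
  simp only [tdel, Levi]
  ring

lemma mkh_ibp {φ : (Fin n → ℂ) → ℝ} (hφ : ContDiff ℝ 2 φ) {f g : (Fin n → ℂ) → ℂ}
    (hf : ContDiff ℝ 1 f) (hg : ContDiff ℝ 1 g) (hsupp : HasCompactSupport f) (k : Fin n) :
    ∫ z, tdel φ k f z * (starRingEnd ℂ) (g z) * ((Real.exp (-(φ z)) : ℝ) : ℂ)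
      = - ∫ z, f z * (starRingEnd ℂ) (wdzbar g k z) * ((Real.exp (-(φ z)) : ℝ) : ℂ) := by
  have hφ1 : ContDiff ℝ 1 φ := hφ.of_le (by norm_num)
  set E : (Fin n → ℂ) → ℂ := fun z => ((Real.exp (-(φ z)) : ℝ) : ℂ) with hEdef
  have hE : ContDiff ℝ 1 E := Complex.ofRealCLM.contDiff.comp (hφ1.neg.exp)
  have hconjg : ContDiff ℝ 1 (fun z => (starRingEnd ℂ) (g z)) :=
    Complex.conjCLE.contDiff.comp hg
  set F : (Fin n → ℂ) → ℂ := fun z => f z * (starRingEnd ℂ) (g z) * E z with hFdef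
  have hF : ContDiff ℝ 1 F := (hf.mul hconjg).mul hE
  have hFc : HasCompactSupport F := hsupp.mul_right.mul_right
  have hpt : ∀ z, wdz F k z
      = tdel φ k f z * (starRingEnd ℂ) (g z) * E z
        + f z * (starRingEnd ℂ) (wdzbar g k z) * E z := by
    intro z
    have hfz : DifferentiableAt ℝ f z := (hf.differentiable one_ne_zero) z
    have hgz' : DifferentiableAt ℝ (fun w => (starRingEnd ℂ) (g w)) z :=
      (hconjg.differentiable one_ne_zero) z
    have hEz : DifferentiableAt ℝ E z := (hE.differentiable one_ne_zero) z
    have hφz : DifferentiableAt ℝ φ z := (hφ1.differentiable one_ne_zero) z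
    have h1 : wdz F k z = wdz (fun w => f w * (starRingEnd ℂ) (g w)) k z * E z
        + (f z * (starRingEnd ℂ) (g z)) * wdz E k z := mkh_wdz_mul (hfz.mul hgz') hEz
    have h2 : wdz E k z = -(wdz (cplx φ) k z) * Real.exp (-(φ z)) := mkh_wdz_expneg k hφz
    rw [h1, mkh_wdz_mul hfz hgz', mkh_wdz_conj g z k, h2]
    simp only [tdel, hEdef]
    ring
  have hcontpdx : Continuous fun z => fderiv ℝ F z (dirx n k) :=
    ((hF.fderiv_right (m := 0) le_rfl).continuous).clm_apply continuous_const
  have hcontpdy : Continuous fun z => fderiv ℝ F z (diry n k) :=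
    ((hF.fderiv_right (m := 0) le_rfl).continuous).clm_apply continuous_const
  have hix : Integrable (fun z => fderiv ℝ F z (dirx n k)) :=
    hcontpdx.integrable_of_hasCompactSupport (hFc.fderiv_apply ℝ _)
  have hiy : Integrable (fun z => fderiv ℝ F z (diry n k)) :=
    hcontpdy.integrable_of_hasCompactSupport (hFc.fderiv_apply ℝ _)
  have hzero : ∫ z, wdz F k z = 0 := by
    have h1 := mkh_integral_fderiv F hF hFc (dirx n k)
    have h2 := mkh_integral_fderiv F hF hFc (diry n k)
    calc ∫ z, wdz F k z
        = ∫ z, (fderiv ℝ F z (dirx n k) - Complex.I * fderiv ℝ F z (diry n k)) / 2 := rfl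
      _ = ((∫ z, fderiv ℝ F z (dirx n k)) - ∫ z, Complex.I * fderiv ℝ F z (diry n k)) / 2 := by
          rw [integral_div, integral_sub hix (hiy.const_mul _)]
      _ = 0 := by rw [h1, integral_const_mul, h2]; simp
  have hconttdel : Continuous fun z => tdel φ k f z :=
    (mkh_contDiff_tdel (m := 0) (N := 1) hφ1 hf (by norm_num) k).continuous
  have hcontwbg : Continuous fun z => wdzbar g k z :=
    (mkh_contDiff_wdzbar (m := 0) (N := 1) hg (by norm_num) k).continuous
  have hintA : Integrable (fun z => tdel φ k f z * (starRingEnd ℂ) (g z) * E z) := by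
    apply Continuous.integrable_of_hasCompactSupport
    · exact (hconttdel.mul hconjg.continuous).mul hE.continuous
    · exact ((mkh_supp_tdel hsupp k).mul_right).mul_right
  have hintB : Integrable (fun z => f z * (starRingEnd ℂ) (wdzbar g k z) * E z) := by
    apply Continuous.integrable_of_hasCompactSupport
    · exact (hf.continuous.mul (Complex.conjCLE.continuous.comp hcontwbg)).mul hE.continuous
    · exact hsupp.mul_right.mul_right
  have hsum : (∫ z, tdel φ k f z * (starRingEnd ℂ) (g z) * E z)
      + ∫ z, f z * (starRingEnd ℂ) (wdzbar g k z) * E z = 0 := by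
    rw [← integral_add hintA hintB]
    rw [← hzero]
    exact integral_congr_ae (Filter.Eventually.of_forall fun z => (hpt z).symm)
  linear_combination hsum

end Helpers4
section Helpers5
variable {n : ℕ}

lemma mkh_supp_sum {ι : Type*} {β : Type*} [AddCommMonoid β] [TopologicalSpace β]
    (s : Finset ι) (f : ι → (Fin n → ℂ) → β)
    (h : ∀ i ∈ s, HasCompactSupport (f i)) :
    HasCompactSupport (fun z => ∑ i ∈ s, f i z) := by
  classical
  induction s using Finset.induction_on with
  | empty => simp only [Finset.sum_empty]; simpa [HasCompactSupport, tsupport] using isCompact_empty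
  | @insert a s' hx ih =>
      simp only [Finset.sum_insert hx]
      exact (h a (Finset.mem_insert_self a s')).add
        (ih fun i hi => h i (Finset.mem_insert_of_mem hi))

lemma mkh_pair (m : Fin n → Fin n → ℝ) (hdiag : ∀ j, m j j = 0) :
    ∑ j, ∑ k, (if j < k then m j k + m k j else 0) = ∑ j, ∑ k, m j k := by
  classical
  calc ∑ j, ∑ k, (if j < k then m j k + m k j else 0)
      = ∑ j, ∑ k, ((if j < k then m j k else 0) + (if j < k then m k j else 0)) := by
        apply Finset.sum_congr rfl; intro j _; apply Finset.sum_congr rfl; intro k _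
        by_cases h : j < k <;> simp [h]
    _ = (∑ j, ∑ k, (if j < k then m j k else 0))
        + ∑ j, ∑ k, (if j < k then m k j else 0) := by
        rw [← Finset.sum_add_distrib]
        apply Finset.sum_congr rfl; intro j _
        rw [← Finset.sum_add_distrib]
    _ = (∑ j, ∑ k, (if j < k then m j k else 0))
        + ∑ j, ∑ k, (if k < j then m j k else 0) := by
        congr 1
        rw [Finset.sum_comm]
    _ = ∑ j, ∑ k, ((if j < k then m j k else 0) + (if k < j then m j k else 0)) := by
        rw [← Finset.sum_add_distrib]
        apply Finset.sum_congr rfl; intro j _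
        rw [← Finset.sum_add_distrib]
    _ = ∑ j, ∑ k, m j k := by
        apply Finset.sum_congr rfl; intro j _; apply Finset.sum_congr rfl; intro k _
        rcases lt_trichotomy j k with h | h | h
        · simp [h, lt_asymm h]
        · simp [h, lt_irrefl, hdiag]
        · simp [h, lt_asymm h]

lemma mkh_key {φ : (Fin n → ℂ) → ℝ} (hφ : ContDiff ℝ 2 φ) {p q : (Fin n → ℂ) → ℂ}
    (hp : ContDiff ℝ 2 p) (hq : ContDiff ℝ 2 q)
    (hpc : HasCompactSupport p) (hqc : HasCompactSupport q) (j k : Fin n) :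
    ∫ z, tdel φ j p z * (starRingEnd ℂ) (tdel φ k q z) * ((Real.exp (-(φ z)) : ℝ) : ℂ)
      = (∫ z, wdzbar p k z * (starRingEnd ℂ) (wdzbar q j z) * ((Real.exp (-(φ z)) : ℝ) : ℂ))
        + ∫ z, Levi φ z j k * p z * (starRingEnd ℂ) (q z)
            * ((Real.exp (-(φ z)) : ℝ) : ℂ) := by
  have hφ1 : ContDiff ℝ 1 φ := hφ.of_le (by norm_num)
  have hφc : ContDiff ℝ 2 (cplx φ) := mkh_contDiff_cplx hφ
  have hp1 : ContDiff ℝ 1 p := hp.of_le (by norm_num)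
  have hq1 : ContDiff ℝ 1 q := hq.of_le (by norm_num)
  have hdp1 : ContDiff ℝ 1 (fun z => tdel φ j p z) :=
    mkh_contDiff_tdel (m := 1) (N := 2) hφ hp (by norm_num) j
  have hapk1 : ContDiff ℝ 1 (fun z => wdzbar p k z) :=
    mkh_contDiff_wdzbar (m := 1) (N := 2) hp (by norm_num) k
  have hapkc : HasCompactSupport (fun z => wdzbar p k z) := mkh_supp_wdzbar hpc k
  have hEcont : Continuous fun z => ((Real.exp (-(φ z)) : ℝ) : ℂ) :=
    Complex.continuous_ofReal.comp (Real.continuous_exp.comp (hφ1.continuous.neg))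
  have hLcont : Continuous fun z => Levi φ z j k := by
    have h1 : ContDiff ℝ 1 (fun w => wdzbar (cplx φ) k w) :=
      mkh_contDiff_wdzbar (m := 1) (N := 2) hφc (by norm_num) k
    exact (mkh_contDiff_wdz (m := 0) (N := 1) h1 (by norm_num) j).continuous
  -- first integration by parts: ∫ δₖq ⬝ conj(δⱼp) E = -∫ q ⬝ conj(∂̄ₖ δⱼ p) E
  have h1 := mkh_ibp hφ hq1 hdp1 hqc k
  -- conjugate it
  have h2 : ∫ z, tdel φ j p z * (starRingEnd ℂ) (tdel φ k q z) * ((Real.exp (-(φ z)) : ℝ) : ℂ)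
      = - ∫ z, wdzbar (fun w => tdel φ j p w) k z * (starRingEnd ℂ) (q z)
          * ((Real.exp (-(φ z)) : ℝ) : ℂ) := by
    have c1 := congrArg (starRingEnd ℂ) h1
    rw [← integral_conj, map_neg, ← integral_conj] at c1
    calc ∫ z, tdel φ j p z * (starRingEnd ℂ) (tdel φ k q z) * ((Real.exp (-(φ z)) : ℝ) : ℂ)
        = ∫ z, (starRingEnd ℂ)
            (tdel φ k q z * (starRingEnd ℂ) (tdel φ j p z) * ((Real.exp (-(φ z)) : ℝ) : ℂ)) := by
          apply integral_congr_ae; filter_upwards with z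
          simp only [map_mul, Complex.conj_conj, Complex.conj_ofReal]
          ring
      _ = - ∫ z, (starRingEnd ℂ)
            (q z * (starRingEnd ℂ) (wdzbar (fun w => tdel φ j p w) k z)
              * ((Real.exp (-(φ z)) : ℝ) : ℂ)) := c1
      _ = - ∫ z, wdzbar (fun w => tdel φ j p w) k z * (starRingEnd ℂ) (q z)
            * ((Real.exp (-(φ z)) : ℝ) : ℂ) := by
          congr 1
          apply integral_congr_ae; filter_upwards with z
          simp only [map_mul, Complex.conj_conj, Complex.conj_ofReal]
          ring
  -- commutator
  have h3 : ∀ z, wdzbar (fun w => tdel φ j p w) k z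
      = tdel φ j (fun w => wdzbar p k w) z - Levi φ z j k * p z :=
    fun z => mkh_comm hφ hp j k z
  -- second integration by parts
  have h4 := mkh_ibp hφ hapk1 hq1 hapkc j
  -- integrability for splitting
  have hint1 : Integrable (fun z => tdel φ j (fun w => wdzbar p k w) z
      * (starRingEnd ℂ) (q z) * ((Real.exp (-(φ z)) : ℝ) : ℂ)) := by
    apply Continuous.integrable_of_hasCompactSupport
    · exact (((mkh_contDiff_tdel (m := 0) (N := 1) hφ1 hapk1 (by norm_num) j).continuous).mul
        (Complex.conjCLE.continuous.comp hq1.continuous)).mul hEcont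
    · exact ((mkh_supp_tdel hapkc j).mul_right).mul_right
  have hint2 : Integrable (fun z => Levi φ z j k * p z
      * (starRingEnd ℂ) (q z) * ((Real.exp (-(φ z)) : ℝ) : ℂ)) := by
    apply Continuous.integrable_of_hasCompactSupport
    · exact (((hLcont.mul hp1.continuous).mul
        (Complex.conjCLE.continuous.comp hq1.continuous))).mul hEcont
    · exact ((hpc.mul_left).mul_right).mul_right
  rw [h2]
  have h5 : ∫ z, wdzbar (fun w => tdel φ j p w) k z * (starRingEnd ℂ) (q z)
      * ((Real.exp (-(φ z)) : ℝ) : ℂ)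
      = (∫ z, tdel φ j (fun w => wdzbar p k w) z * (starRingEnd ℂ) (q z)
          * ((Real.exp (-(φ z)) : ℝ) : ℂ))
        - ∫ z, Levi φ z j k * p z * (starRingEnd ℂ) (q z)
            * ((Real.exp (-(φ z)) : ℝ) : ℂ) := by
    rw [← integral_sub hint1 hint2]
    apply integral_congr_ae; filter_upwards with z
    rw [h3 z]
    ring
  rw [h5, h4]
  have h6 : ∫ z, wdzbar p k z * (starRingEnd ℂ) (wdzbar q j z)
      * ((Real.exp (-(φ z)) : ℝ) : ℂ)
      = ∫ z, (fun w => wdzbar p k w) z * (starRingEnd ℂ) (wdzbar q j z)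
        * ((Real.exp (-(φ z)) : ℝ) : ℂ) := rfl
  rw [h6]
  ring

end Helpers5
section Helpers5b
variable {n : ℕ}

lemma mkh_norm_sq_eq (w : ℂ) : ‖w‖ ^ 2 = (w * (starRingEnd ℂ) w).re := by
  rw [Complex.mul_conj']
  rw [show ((‖w‖ : ℂ) ^ 2) = ((‖w‖ ^ 2 : ℝ) : ℂ) by push_cast; ring]
  exact (Complex.ofReal_re _).symm

lemma mkh_re_symm (z w : ℂ) : (z * (starRingEnd ℂ) w).re = (w * (starRingEnd ℂ) z).re := by
  simp only [Complex.mul_re, Complex.conj_re, Complex.conj_im]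
  ring

lemma mkh_pointwise (x : Fin n → Fin n → ℂ) (y : Fin n → ℂ) (e : ℝ) :
    (∑ j, ∑ k, (if j < k then ‖x j k - x k j‖ ^ 2 * e else 0)) + ‖∑ j, y j‖ ^ 2 * e
      = (∑ j, ∑ k, ‖x j k‖ ^ 2 * e)
        + (∑ j, ∑ k, (y j * (starRingEnd ℂ) (y k) * ((e : ℝ) : ℂ)
            - x j k * (starRingEnd ℂ) (x k j) * ((e : ℝ) : ℂ))).re := by
  classical
  have hre : ∀ w : ℂ, (w * ((e : ℝ) : ℂ)).re = w.re * e := by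
    intro w
    simp [Complex.mul_re]
  -- the first double sum via pairing
  have hm : (∑ j, ∑ k, (if j < k then ‖x j k - x k j‖ ^ 2 * e else 0))
      = ∑ j, ∑ k, (‖x j k‖ ^ 2 * e - (x j k * (starRingEnd ℂ) (x k j)).re * e) := by
    rw [← mkh_pair (fun j k => ‖x j k‖ ^ 2 * e - (x j k * (starRingEnd ℂ) (x k j)).re * e)
      (fun j => by
        show ‖x j j‖ ^ 2 * e - (x j j * (starRingEnd ℂ) (x j j)).re * e = 0
        rw [mkh_norm_sq_eq]; ring)]
    apply Finset.sum_congr rfl; intro j _; apply Finset.sum_congr rfl; intro k _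
    by_cases h : j < k
    · simp only [h, if_true]
      have h1 : ‖x j k - x k j‖ ^ 2
          = ‖x j k‖ ^ 2 + ‖x k j‖ ^ 2 - 2 * (x j k * (starRingEnd ℂ) (x k j)).re := by
        have h2 := Complex.normSq_sub (x j k) (x k j)
        have h3 : ∀ w : ℂ, ‖w‖ ^ 2 = Complex.normSq w := fun w => by
          rw [Complex.sq_norm]
        rw [h3, h3, h3]
        exact h2
      rw [h1, mkh_re_symm (x k j) (x j k)]
      ring
    · simp [h]
  -- the ‖∑ y‖² term
  have hy : ‖∑ j, y j‖ ^ 2 * e = ∑ j, ∑ k, (y j * (starRingEnd ℂ) (y k)).re * e := by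
    rw [mkh_norm_sq_eq]
    have : (∑ j, y j) * (starRingEnd ℂ) (∑ k, y k) = ∑ j, ∑ k, y j * (starRingEnd ℂ) (y k) := by
      rw [map_sum, Finset.sum_mul_sum]
    rw [this, Complex.re_sum]
    rw [Finset.sum_mul]
    apply Finset.sum_congr rfl; intro j _
    rw [Complex.re_sum, Finset.sum_mul]
  -- re of the difference double-sum
  have hq : (∑ j, ∑ k, (y j * (starRingEnd ℂ) (y k) * ((e : ℝ) : ℂ)
        - x j k * (starRingEnd ℂ) (x k j) * ((e : ℝ) : ℂ))).re
      = ∑ j, ∑ k, ((y j * (starRingEnd ℂ) (y k)).re * e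
        - (x j k * (starRingEnd ℂ) (x k j)).re * e) := by
    rw [Complex.re_sum]
    apply Finset.sum_congr rfl; intro j _
    rw [Complex.re_sum]
    apply Finset.sum_congr rfl; intro k _
    rw [Complex.sub_re, hre, hre]
  rw [hm, hy, hq, ← Finset.sum_add_distrib, ← Finset.sum_add_distrib]
  apply Finset.sum_congr rfl; intro j _
  rw [← Finset.sum_add_distrib, ← Finset.sum_add_distrib]
  apply Finset.sum_congr rfl; intro k _
  ring

end Helpers5b
section Helpers5c
variable {n : ℕ}

lemma mkh_integrable_re {f : (Fin n → ℂ) → ℂ} (hf : Integrable f) :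
    Integrable (fun z => (f z).re) := by
  simpa [RCLike.re_to_complex] using hf.re

lemma mkh_integral_re {f : (Fin n → ℂ) → ℂ} (hf : Integrable f) :
    ∫ z, (f z).re = (∫ z, f z).re := by
  simpa [RCLike.re_to_complex] using integral_re hf

end Helpers5c
/-- basic estimate `ε‖u‖²_φ ≤ ‖∂̄u‖²_φ + ‖∂̄*_φ u‖²_φ` when the lowest
Levi eigenvalue is `≥ ε`. -/
theorem stmt4 (n : ℕ) (φ : (Fin n → ℂ) → ℝ) (hφ : ContDiff ℝ 2 φ)
    (ε : ℝ) (hε : 0 < ε)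
    (heig : ∀ (z : Fin n → ℂ) (v : Fin n → ℂ),
      ε * ∑ j, ‖v j‖ ^ 2 ≤ (∑ j, ∑ k, Levi φ z j k * v j * (starRingEnd ℂ) (v k)).re)
    (u : Fin n → (Fin n → ℂ) → ℂ)
    (hu : ∀ j, ContDiff ℝ (⊤ : ℕ∞) (u j)) (huc : ∀ j, HasCompactSupport (u j)) :
    ε * ∫ z, (∑ j, ‖u j z‖ ^ 2) * Real.exp (-(φ z)) ≤
      (∑ j, ∑ k, if j < k then
        ∫ z, ‖wdzbar (u j) k z - wdzbar (u k) j z‖ ^ 2 * Real.exp (-(φ z)) else 0)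
      + ∫ z, ‖∑ j, tdel φ j (u j) z‖ ^ 2 * Real.exp (-(φ z)) := by
  classical
  have hφ1 : ContDiff ℝ 1 φ := hφ.of_le (by norm_num)
  have hφc : ContDiff ℝ 2 (cplx φ) := mkh_contDiff_cplx hφ
  have hu2 : ∀ j, ContDiff ℝ 2 (u j) := fun j => (hu j).of_le (WithTop.coe_le_coe.mpr le_top)
  have hu1 : ∀ j, ContDiff ℝ 1 (u j) := fun j => (hu j).of_le (by simp)
  have hEcont : Continuous fun z => Real.exp (-(φ z)) :=
    Real.continuous_exp.comp (hφ1.continuous.neg)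
  have hEccont : Continuous fun z => ((Real.exp (-(φ z)) : ℝ) : ℂ) :=
    Complex.continuous_ofReal.comp hEcont
  have hEpos : ∀ z, 0 ≤ Real.exp (-(φ z)) := fun z => (Real.exp_pos _).le
  have hacont : ∀ j k, Continuous fun z => wdzbar (u j) k z := fun j k =>
    (mkh_contDiff_wdzbar (m := 0) (N := 1) (hu1 j) (by norm_num) k).continuous
  have hasupp : ∀ j k, HasCompactSupport fun z => wdzbar (u j) k z := fun j k =>
    mkh_supp_wdzbar (huc j) k
  have hdcont : ∀ j, Continuous fun z => tdel φ j (u j) z := fun j =>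
    (mkh_contDiff_tdel (m := 0) (N := 1) hφ1 (hu1 j) (by norm_num) j).continuous
  have hdsupp : ∀ j, HasCompactSupport fun z => tdel φ j (u j) z := fun j =>
    mkh_supp_tdel (huc j) j
  have hLcont : ∀ j k, Continuous fun z => Levi φ z j k := fun j k =>
    (mkh_contDiff_wdz (m := 0) (N := 1)
      (mkh_contDiff_wdzbar (m := 1) (N := 2) hφc (by norm_num) k) (by norm_num) j).continuous
  have hucont : ∀ j, Continuous (u j) := fun j => (hu1 j).continuous
  have hconj : ∀ (f : (Fin n → ℂ) → ℂ), Continuous f →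
      Continuous fun z => (starRingEnd ℂ) (f z) :=
    fun f hf => Complex.conjCLE.continuous.comp hf
  -- integrable families
  have hintA : ∀ j k : Fin n, Integrable (fun z => tdel φ j (u j) z
      * (starRingEnd ℂ) (tdel φ k (u k) z) * ((Real.exp (-(φ z)) : ℝ) : ℂ)) := fun j k =>
    Continuous.integrable_of_hasCompactSupport
      (((hdcont j).mul (hconj _ (hdcont k))).mul hEccont)
      (((hdsupp j).mul_right).mul_right)
  have hintB : ∀ j k : Fin n, Integrable (fun z => wdzbar (u j) k z
      * (starRingEnd ℂ) (wdzbar (u k) j z) * ((Real.exp (-(φ z)) : ℝ) : ℂ)) := fun j k =>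
    Continuous.integrable_of_hasCompactSupport
      (((hacont j k).mul (hconj _ (hacont k j))).mul hEccont)
      (((hasupp j k).mul_right).mul_right)
  have hintL : ∀ j k : Fin n, Integrable (fun z => Levi φ z j k * u j z
      * (starRingEnd ℂ) (u k z) * ((Real.exp (-(φ z)) : ℝ) : ℂ)) := fun j k =>
    Continuous.integrable_of_hasCompactSupport
      ((((hLcont j k).mul (hucont j)).mul (hconj _ (hucont k))).mul hEccont)
      ((((huc j).mul_left).mul_right).mul_right)
  have hintN1 : ∀ j k : Fin n, Integrable (fun z =>
      ‖wdzbar (u j) k z - wdzbar (u k) j z‖ ^ 2 * Real.exp (-(φ z))) := fun j k =>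
    Continuous.integrable_of_hasCompactSupport
      ((((hacont j k).sub (hacont k j)).norm.pow 2).mul hEcont)
      (((mkh_supp_sub (hasupp j k) (hasupp k j)).comp_left
        (g := fun w : ℂ => ‖w‖ ^ 2) (by simp)).mul_right)
  have hintNpos : ∀ j k : Fin n, Integrable (fun z =>
      ‖wdzbar (u j) k z‖ ^ 2 * Real.exp (-(φ z))) := fun j k =>
    Continuous.integrable_of_hasCompactSupport
      (((hacont j k).norm.pow 2).mul hEcont)
      (((hasupp j k).comp_left (g := fun w : ℂ => ‖w‖ ^ 2) (by simp)).mul_right)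
  have hSsupp : HasCompactSupport fun z => ∑ j, tdel φ j (u j) z :=
    mkh_supp_sum Finset.univ _ (fun j _ => hdsupp j)
  have hScont : Continuous fun z => ∑ j, tdel φ j (u j) z :=
    continuous_finset_sum _ (fun j _ => hdcont j)
  have hintN2 : Integrable (fun z =>
      ‖∑ j, tdel φ j (u j) z‖ ^ 2 * Real.exp (-(φ z))) :=
    Continuous.integrable_of_hasCompactSupport ((hScont.norm.pow 2).mul hEcont)
      ((hSsupp.comp_left (g := fun w : ℂ => ‖w‖ ^ 2) (by simp)).mul_right)
  have hintLHS : Integrable (fun z => (∑ j, ‖u j z‖ ^ 2) * Real.exp (-(φ z))) :=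
    Continuous.integrable_of_hasCompactSupport
      ((continuous_finset_sum _ fun j _ => (hucont j).norm.pow 2).mul hEcont)
      ((mkh_supp_sum Finset.univ (fun j => fun z => ‖u j z‖ ^ 2)
        (fun j _ => (huc j).comp_left (g := fun w : ℂ => ‖w‖ ^ 2) (by simp))).mul_right)
  have hiteint : ∀ j k : Fin n, Integrable (fun z =>
      if j < k then ‖wdzbar (u j) k z - wdzbar (u k) j z‖ ^ 2 * Real.exp (-(φ z)) else 0) := by
    intro j k; by_cases h : j < k
    · simpa [h] using hintN1 j k
    · simp only [h, if_false]; exact integrable_zero _ _ _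
  -- rewrite the double sum of integrals as one integral
  have hT1 : (∑ j, ∑ k, if j < k then
        ∫ z, ‖wdzbar (u j) k z - wdzbar (u k) j z‖ ^ 2 * Real.exp (-(φ z)) else 0)
      = ∫ z, ∑ j, ∑ k, (if j < k then
          ‖wdzbar (u j) k z - wdzbar (u k) j z‖ ^ 2 * Real.exp (-(φ z)) else 0) := by
    rw [integral_finset_sum _ (fun j _ => integrable_finset_sum _ (fun k _ => hiteint j k))]
    apply Finset.sum_congr rfl; intro j _
    rw [integral_finset_sum _ (fun k _ => hiteint j k)]
    apply Finset.sum_congr rfl; intro k _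
    by_cases h : j < k
    · simp [h]
    · simp [h]
  have hiteintsum : Integrable (fun z => ∑ j, ∑ k, (if j < k then
      ‖wdzbar (u j) k z - wdzbar (u k) j z‖ ^ 2 * Real.exp (-(φ z)) else 0)) :=
    integrable_finset_sum _ (fun j _ => integrable_finset_sum _ fun k _ => hiteint j k)
  rw [hT1, ← integral_add hiteintsum hintN2]
  -- pointwise algebraic identity
  have hptw : (∫ z, ((∑ j, ∑ k, (if j < k then
        ‖wdzbar (u j) k z - wdzbar (u k) j z‖ ^ 2 * Real.exp (-(φ z)) else 0))
        + ‖∑ j, tdel φ j (u j) z‖ ^ 2 * Real.exp (-(φ z))))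
      = ∫ z, ((∑ j, ∑ k, ‖wdzbar (u j) k z‖ ^ 2 * Real.exp (-(φ z)))
        + (∑ j, ∑ k, (tdel φ j (u j) z * (starRingEnd ℂ) (tdel φ k (u k) z)
            * ((Real.exp (-(φ z)) : ℝ) : ℂ)
          - wdzbar (u j) k z * (starRingEnd ℂ) (wdzbar (u k) j z)
            * ((Real.exp (-(φ z)) : ℝ) : ℂ))).re) := by
    apply integral_congr_ae
    filter_upwards with z
    exact mkh_pointwise (fun j k => wdzbar (u j) k z) (fun j => tdel φ j (u j) z)
      (Real.exp (-(φ z)))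
  rw [hptw]
  have hQint : Integrable (fun z => ∑ j, ∑ k,
      (tdel φ j (u j) z * (starRingEnd ℂ) (tdel φ k (u k) z) * ((Real.exp (-(φ z)) : ℝ) : ℂ)
        - wdzbar (u j) k z * (starRingEnd ℂ) (wdzbar (u k) j z)
          * ((Real.exp (-(φ z)) : ℝ) : ℂ))) :=
    integrable_finset_sum _ (fun j _ => integrable_finset_sum _
      (fun k _ => (hintA j k).sub (hintB j k)))
  have hNposint : Integrable (fun z => ∑ j, ∑ k,
      ‖wdzbar (u j) k z‖ ^ 2 * Real.exp (-(φ z))) :=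
    integrable_finset_sum _ (fun j _ => integrable_finset_sum _ (fun k _ => hintNpos j k))
  rw [integral_add hNposint (mkh_integrable_re hQint)]
  have h8 : 0 ≤ ∫ z, ∑ j, ∑ k, ‖wdzbar (u j) k z‖ ^ 2 * Real.exp (-(φ z)) := by
    apply integral_nonneg
    intro z
    apply Finset.sum_nonneg; intro j _
    apply Finset.sum_nonneg; intro k _
    exact mul_nonneg (sq_nonneg _) (hEpos z)
  -- compute the re-part integral through the key identity
  have hGint : Integrable (fun z => (∑ j, ∑ k, Levi φ z j k * u j z
      * (starRingEnd ℂ) (u k z)) * ((Real.exp (-(φ z)) : ℝ) : ℂ)) := by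
    apply (integrable_finset_sum _ (fun j (_ : j ∈ Finset.univ) =>
      integrable_finset_sum _ (fun k (_ : k ∈ Finset.univ) => hintL j k))).congr
    filter_upwards with z
    rw [Finset.sum_mul]
    apply Finset.sum_congr rfl; intro j _
    rw [Finset.sum_mul]
  have h9 : (∫ z, (∑ j, ∑ k,
      (tdel φ j (u j) z * (starRingEnd ℂ) (tdel φ k (u k) z) * ((Real.exp (-(φ z)) : ℝ) : ℂ)
        - wdzbar (u j) k z * (starRingEnd ℂ) (wdzbar (u k) j z)
          * ((Real.exp (-(φ z)) : ℝ) : ℂ))).re)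
      = ∫ z, (∑ j, ∑ k, Levi φ z j k * u j z * (starRingEnd ℂ) (u k z)).re
          * Real.exp (-(φ z)) := by
    rw [mkh_integral_re hQint]
    have e1 : (∫ z, ∑ j, ∑ k,
        (tdel φ j (u j) z * (starRingEnd ℂ) (tdel φ k (u k) z) * ((Real.exp (-(φ z)) : ℝ) : ℂ)
          - wdzbar (u j) k z * (starRingEnd ℂ) (wdzbar (u k) j z)
            * ((Real.exp (-(φ z)) : ℝ) : ℂ)))
        = ∑ j, ∑ k, ∫ z, (tdel φ j (u j) z * (starRingEnd ℂ) (tdel φ k (u k) z)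
            * ((Real.exp (-(φ z)) : ℝ) : ℂ)
          - wdzbar (u j) k z * (starRingEnd ℂ) (wdzbar (u k) j z)
            * ((Real.exp (-(φ z)) : ℝ) : ℂ)) := by
      rw [integral_finset_sum (μ := volume) Finset.univ
        (f := fun j z => ∑ k, (tdel φ j (u j) z * (starRingEnd ℂ) (tdel φ k (u k) z)
            * ((Real.exp (-(φ z)) : ℝ) : ℂ)
          - wdzbar (u j) k z * (starRingEnd ℂ) (wdzbar (u k) j z)
            * ((Real.exp (-(φ z)) : ℝ) : ℂ)))
        (fun j _ => integrable_finset_sum _ (fun k _ => (hintA j k).sub (hintB j k)))]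
      apply Finset.sum_congr rfl; intro j _
      rw [integral_finset_sum (μ := volume) Finset.univ
        (f := fun k z => (tdel φ j (u j) z * (starRingEnd ℂ) (tdel φ k (u k) z)
            * ((Real.exp (-(φ z)) : ℝ) : ℂ)
          - wdzbar (u j) k z * (starRingEnd ℂ) (wdzbar (u k) j z)
            * ((Real.exp (-(φ z)) : ℝ) : ℂ)))
        (fun k _ => (hintA j k).sub (hintB j k))]
    have e2 : ∀ j k : Fin n, (∫ z, (tdel φ j (u j) z * (starRingEnd ℂ) (tdel φ k (u k) z)
            * ((Real.exp (-(φ z)) : ℝ) : ℂ)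
          - wdzbar (u j) k z * (starRingEnd ℂ) (wdzbar (u k) j z)
            * ((Real.exp (-(φ z)) : ℝ) : ℂ)))
        = ∫ z, Levi φ z j k * u j z * (starRingEnd ℂ) (u k z)
            * ((Real.exp (-(φ z)) : ℝ) : ℂ) := by
      intro j k
      rw [integral_sub (hintA j k) (hintB j k)]
      rw [mkh_key hφ (hu2 j) (hu2 k) (huc j) (huc k) j k]
      ring
    have e3 : (∑ j : Fin n, ∑ k : Fin n, ∫ z, Levi φ z j k * u j z
          * (starRingEnd ℂ) (u k z) * ((Real.exp (-(φ z)) : ℝ) : ℂ))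
        = ∫ z, (∑ j, ∑ k, Levi φ z j k * u j z * (starRingEnd ℂ) (u k z))
            * ((Real.exp (-(φ z)) : ℝ) : ℂ) := by
      calc (∑ j : Fin n, ∑ k : Fin n, ∫ z, Levi φ z j k * u j z
              * (starRingEnd ℂ) (u k z) * ((Real.exp (-(φ z)) : ℝ) : ℂ))
          = ∑ j : Fin n, ∫ z, ∑ k, Levi φ z j k * u j z
              * (starRingEnd ℂ) (u k z) * ((Real.exp (-(φ z)) : ℝ) : ℂ) :=
            Finset.sum_congr rfl fun j _ => (integral_finset_sum (μ := volume) Finset.univ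
              (f := fun k z => Levi φ z j k * u j z * (starRingEnd ℂ) (u k z)
                * ((Real.exp (-(φ z)) : ℝ) : ℂ)) (fun k _ => hintL j k)).symm
        _ = ∫ z, ∑ j, ∑ k, Levi φ z j k * u j z
              * (starRingEnd ℂ) (u k z) * ((Real.exp (-(φ z)) : ℝ) : ℂ) :=
            (integral_finset_sum (μ := volume) Finset.univ
              (f := fun j z => ∑ k, Levi φ z j k * u j z * (starRingEnd ℂ) (u k z)
                * ((Real.exp (-(φ z)) : ℝ) : ℂ))
              (fun j _ => integrable_finset_sum _ (fun k _ => hintL j k))).symm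
        _ = ∫ z, (∑ j, ∑ k, Levi φ z j k * u j z * (starRingEnd ℂ) (u k z))
              * ((Real.exp (-(φ z)) : ℝ) : ℂ) := by
            apply integral_congr_ae; filter_upwards with z
            rw [Finset.sum_mul]
            apply Finset.sum_congr rfl; intro j _
            rw [Finset.sum_mul]
    rw [e1, Finset.sum_congr rfl (fun j _ => Finset.sum_congr rfl (fun k _ => e2 j k)), e3,
      ← mkh_integral_re hGint]
    apply integral_congr_ae; filter_upwards with z
    rw [show ∀ w : ℂ, (w * ((Real.exp (-(φ z)) : ℝ) : ℂ)).re = w.re * Real.exp (-(φ z))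
      from fun w => by rw [Complex.mul_re, Complex.ofReal_re, Complex.ofReal_im]; ring]
  rw [h9]
  -- final pointwise eigenvalue bound
  have hGreint : Integrable (fun z => (∑ j, ∑ k, Levi φ z j k * u j z
      * (starRingEnd ℂ) (u k z)).re * Real.exp (-(φ z))) := by
    apply (mkh_integrable_re hGint).congr
    filter_upwards with z
    rw [show ∀ w : ℂ, (w * ((Real.exp (-(φ z)) : ℝ) : ℂ)).re = w.re * Real.exp (-(φ z))
      from fun w => by rw [Complex.mul_re, Complex.ofReal_re, Complex.ofReal_im]; ring]
  have h10 : ε * ∫ z, (∑ j, ‖u j z‖ ^ 2) * Real.exp (-(φ z))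
      ≤ ∫ z, (∑ j, ∑ k, Levi φ z j k * u j z * (starRingEnd ℂ) (u k z)).re
          * Real.exp (-(φ z)) := by
    rw [← integral_const_mul]
    apply integral_mono (hintLHS.const_mul ε) hGreint
    intro z
    simp only [← mul_assoc]
    exact mul_le_mul_of_nonneg_right (heig z (fun j => u j z)) (hEpos z)
  linarith
end
end

section
/- Let φ : ℂ^n → ℝ be C² and ε > 0. Set Ψ(z) = |∇φ(z)|² + (1+ε)Δφ(z). Then for every f ∈ C_0^∞(ℂ^n), ∫ Ψ |f|² e^{−φ} dλ ≤ (2 + ε + 1/ε) Σ_{j=1}^n (‖X_j f‖²_φ + ‖Y_j f‖²_φ), where X_j = ∂/∂x_j − ∂φ/∂x_j and Y_j = ∂/∂y_j − ∂φ/∂y_j. -/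
open MeasureTheory Filter Complex

noncomputable section

lemma normsq' (c : ℂ) : ‖c‖ ^ 2 = c.re * c.re + c.im * c.im := by
  rw [← Complex.normSq_eq_norm_sq, Complex.normSq_apply]

lemma elem_ineq (ε : ℝ) (hε : 0 < ε) (x1 x2 y1 y2 : ℝ) :
    (x1 - y1) ^ 2 + (x2 - y2) ^ 2 ≤ (1 + 1 / ε) * (y1 ^ 2 + y2 ^ 2) + (1 + ε) * (x1 ^ 2 + x2 ^ 2) := by
  have h1 : 0 ≤ (1 / ε) * y1 ^ 2 + ε * x1 ^ 2 + 2 * x1 * y1 := by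
    have h : (1 / ε) * y1 ^ 2 + ε * x1 ^ 2 + 2 * x1 * y1 = (1 / ε) * (y1 + ε * x1) ^ 2 := by
      field_simp; ring
    rw [h]; positivity
  have h2 : 0 ≤ (1 / ε) * y2 ^ 2 + ε * x2 ^ 2 + 2 * x2 * y2 := by
    have h : (1 / ε) * y2 ^ 2 + ε * x2 ^ 2 + 2 * x2 * y2 = (1 / ε) * (y2 + ε * x2) ^ 2 := by
      field_simp; ring
    rw [h]; positivity
  nlinarith [h1, h2]

lemma key_dir (n : ℕ) (φ : (Fin n → ℂ) → ℝ) (hφ : ContDiff ℝ 2 φ) (ε : ℝ) (hε : 0 < ε)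
    (f : (Fin n → ℂ) → ℂ) (hf : ContDiff ℝ (⊤ : ℕ∞) f) (hfc : HasCompactSupport f) (v : Fin n → ℂ) :
    ∫ z, ((fderiv ℝ φ z v) ^ 2 + (1 + ε) * fderiv ℝ (fun w => fderiv ℝ φ w v) z v)
        * ‖f z‖ ^ 2 * Real.exp (-(φ z)) ≤
      (2 + ε + 1 / ε) *
        ∫ z, ‖fderiv ℝ f z v - ((fderiv ℝ φ z v : ℝ) : ℂ) * f z‖ ^ 2 * Real.exp (-(φ z)) := by
  -- abbreviations
  set a : (Fin n → ℂ) → ℝ := fun z => fderiv ℝ φ z v with ha_def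
  set b : (Fin n → ℂ) → ℝ := fun z => fderiv ℝ a z v with hb_def
  set e : (Fin n → ℂ) → ℝ := fun z => Real.exp (-(φ z)) with he_def
  set g : (Fin n → ℂ) → ℝ := fun z => (f z).re * (f z).re + (f z).im * (f z).im with hg_def
  set Df : (Fin n → ℂ) → ℂ := fun z => fderiv ℝ f z v with hDf_def
  set X : (Fin n → ℂ) → ℂ := fun z => Df z - ((a z : ℝ) : ℂ) * f z with hX_def
  set G : (Fin n → ℂ) → ℝ :=
    fun z => 2 * ((f z).re * (Df z).re + (f z).im * (Df z).im) with hG_def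
  -- regularity
  have ha1 : ContDiff ℝ 1 a :=
    ((ContinuousLinearMap.apply ℝ ℝ v).contDiff).comp (hφ.fderiv_right (by norm_num))
  have hacont : Continuous a := ha1.continuous
  have hadiff : Differentiable ℝ a := ha1.differentiable one_ne_zero
  have hbcont : Continuous b :=
    ((ContinuousLinearMap.apply ℝ ℝ v).continuous).comp (ha1.continuous_fderiv one_ne_zero)
  have hφd : Differentiable ℝ φ := hφ.differentiable two_ne_zero
  have hfd : Differentiable ℝ f := hf.differentiable (by simp)
  have hfcont : Continuous f := hf.continuous
  have hDfcont : Continuous Df :=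
    ((ContinuousLinearMap.apply ℝ ℂ v).continuous).comp (hf.continuous_fderiv (by simp))
  have hecont : Continuous e := Real.continuous_exp.comp (hφ.continuous.neg)
  have hgcont : Continuous g := by
    apply Continuous.add <;> apply Continuous.mul <;> fun_prop
  have hGcont : Continuous G := by fun_prop
  have hXcont : Continuous X := by fun_prop
  -- compact supports
  have hgcs : HasCompactSupport g := by
    have : g = (fun c : ℂ => c.re * c.re + c.im * c.im) ∘ f := rfl
    rw [this]; exact hfc.comp_left (by simp)
  have hDfcs : HasCompactSupport Df := by
    have : Df = (fun L : (Fin n → ℂ) →L[ℝ] ℂ => L v) ∘ (fderiv ℝ f) := rfl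
    rw [this]; exact (hfc.fderiv ℝ).comp_left (by simp)
  have hafcs : HasCompactSupport (fun z => ((a z : ℝ) : ℂ) * f z) := hfc.mul_left
  have hXcs : HasCompactSupport X := by
    have : X = fun z => Df z + (-(((a z : ℝ) : ℂ) * f z)) := by funext z; rw [hX_def]; ring
    rw [this]; exact hDfcs.add (by simpa [HasCompactSupport, tsupport, Function.support_neg] using hafcs)
  -- integrability
  have int1 : Integrable (fun z => ‖X z‖ ^ 2 * e z) := by
    apply Continuous.integrable_of_hasCompactSupport (by fun_prop)
    exact ((hXcs.comp_left (g := fun c : ℂ => ‖c‖ ^ 2) (by simp)).mul_right)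
  have int2 : Integrable (fun z => ‖Df z‖ ^ 2 * e z) := by
    apply Continuous.integrable_of_hasCompactSupport (by fun_prop)
    exact ((hDfcs.comp_left (g := fun c : ℂ => ‖c‖ ^ 2) (by simp)).mul_right)
  have int3 : Integrable (fun z => a z ^ 2 * g z * e z) := by
    apply Continuous.integrable_of_hasCompactSupport (by fun_prop)
    exact (hgcs.mul_left.mul_right)
  have int4 : Integrable (fun z => b z * g z * e z) := by
    apply Continuous.integrable_of_hasCompactSupport (by fun_prop)
    exact (hgcs.mul_left.mul_right)
  have int5 : Integrable (fun z => (a z * e z) * G z) := by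
    apply Continuous.integrable_of_hasCompactSupport (by fun_prop)
    have hGcs : HasCompactSupport G := by
      apply hfc.mono
      intro z hz
      rw [Function.mem_support] at hz ⊢
      intro h; apply hz; simp [hG_def, h]
    exact hGcs.mul_left
  have intFg : Integrable (fun z => (a z * e z) * g z) := by
    apply Continuous.integrable_of_hasCompactSupport (by fun_prop)
    exact hgcs.mul_left
  -- derivative of g
  have hg' : ∀ z, fderiv ℝ g z v = G z := by
    intro z
    have hF : HasFDerivAt f (fderiv ℝ f z) z := (hfd z).hasFDerivAt
    have h1 := Complex.reCLM.hasFDerivAt.comp z hF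
    have h2 := Complex.imCLM.hasFDerivAt.comp z hF
    have hgfd : HasFDerivAt g
        (((f z).re • (Complex.reCLM.comp (fderiv ℝ f z)) +
            (f z).re • (Complex.reCLM.comp (fderiv ℝ f z))) +
          ((f z).im • (Complex.imCLM.comp (fderiv ℝ f z)) +
            (f z).im • (Complex.imCLM.comp (fderiv ℝ f z)))) z := by
      rw [hg_def]; exact (h1.mul h1).add (h2.mul h2)
    rw [hgfd.fderiv]
    simp only [hG_def, hDf_def, ContinuousLinearMap.add_apply, ContinuousLinearMap.coe_smul',
      Pi.smul_apply, ContinuousLinearMap.coe_comp', Function.comp_apply, Complex.reCLM_apply,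
      Complex.imCLM_apply, smul_eq_mul]
    ring
  -- derivative of the weight a * e
  have hF' : ∀ z, fderiv ℝ (fun w => a w * e w) z v = b z * e z - a z ^ 2 * e z := by
    intro z
    have hae : HasFDerivAt a (fderiv ℝ a z) z := (hadiff z).hasFDerivAt
    have hphi : HasFDerivAt φ (fderiv ℝ φ z) z := (hφd z).hasFDerivAt
    have hexp : HasFDerivAt (fun w => Real.exp (-(φ w)))
        (Real.exp (-(φ z)) • (-(fderiv ℝ φ z))) z := (hphi.neg).exp
    have hmul : HasFDerivAt (fun w => a w * e w)
        (a z • (Real.exp (-(φ z)) • (-(fderiv ℝ φ z))) + Real.exp (-(φ z)) • fderiv ℝ a z) z := by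
      rw [he_def]; exact hae.mul hexp
    rw [hmul.fderiv]
    have hbz : fderiv ℝ a z v = b z := by rw [hb_def]
    have haz : fderiv ℝ φ z v = a z := by rw [ha_def]
    have hez : Real.exp (-(φ z)) = e z := by rw [he_def]
    simp only [ContinuousLinearMap.add_apply, ContinuousLinearMap.coe_smul', Pi.smul_apply,
      ContinuousLinearMap.neg_apply, smul_eq_mul, hbz, haz, hez]
    ring
  -- integration by parts
  have hibp : ∫ z, (a z * e z) * G z
      = (∫ z, a z ^ 2 * g z * e z) - ∫ z, b z * g z * e z := by
    have hFdiff : Differentiable ℝ (fun z => a z * e z) := by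
      have : Differentiable ℝ e := by rw [he_def]; exact (hφd.neg).exp
      exact hadiff.mul this
    have hgdiff : Differentiable ℝ g := by
      rw [hg_def]
      exact ((Complex.reCLM.differentiable.comp hfd).mul
        (Complex.reCLM.differentiable.comp hfd)).add
        ((Complex.imCLM.differentiable.comp hfd).mul (Complex.imCLM.differentiable.comp hfd))
    have e1 : (fun x => fderiv ℝ (fun z => a z * e z) x v * g x)
        = fun x => b x * g x * e x - a x ^ 2 * g x * e x := by
      funext x; rw [hF' x]; ring
    have e2 : (fun x => (a x * e x) * fderiv ℝ g x v) = fun x => (a x * e x) * G x := by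
      funext x; rw [hg' x]
    have h0 := integral_mul_fderiv_eq_neg_fderiv_mul_of_integrable (μ := volume)
      (f := fun z => a z * e z) (g := g) (v := v)
      (by rw [e1]; exact int4.sub int3) (by rw [e2]; exact int5) intFg (fun x _ => hFdiff x) (fun x _ => hgdiff x)
    rw [e1, e2] at h0
    rw [h0, integral_sub int4 int3]
    ring
  -- pointwise expansion of ‖X‖²
  have hpt1 : ∀ z, ‖X z‖ ^ 2 * e z
      = ‖Df z‖ ^ 2 * e z - (a z * e z) * G z + a z ^ 2 * g z * e z := by
    intro z
    simp only [hX_def, hG_def, hg_def, normsq', Complex.sub_re, Complex.sub_im, Complex.mul_re,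
      Complex.mul_im, Complex.ofReal_re, Complex.ofReal_im]
    ring
  have hI1 : ∫ z, ‖X z‖ ^ 2 * e z
      = (∫ z, ‖Df z‖ ^ 2 * e z) - (∫ z, (a z * e z) * G z) + ∫ z, a z ^ 2 * g z * e z := by
    rw [show (fun z => ‖X z‖ ^ 2 * e z)
        = fun z => ‖Df z‖ ^ 2 * e z - (a z * e z) * G z + a z ^ 2 * g z * e z from funext hpt1]
    have hsub : Integrable (fun z => ‖Df z‖ ^ 2 * e z - (a z * e z) * G z) := int2.sub int5
    rw [integral_add hsub int3, integral_sub int2 int5]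
  have hbge : ∫ z, b z * g z * e z
      = (∫ z, ‖X z‖ ^ 2 * e z) - ∫ z, ‖Df z‖ ^ 2 * e z := by
    linarith [hI1, hibp]
  -- pointwise elementary inequality
  have hpt2 : ∀ z, a z ^ 2 * g z * e z
      ≤ (1 + 1 / ε) * (‖X z‖ ^ 2 * e z) + (1 + ε) * (‖Df z‖ ^ 2 * e z) := by
    intro z
    have key : a z ^ 2 * g z ≤ (1 + 1 / ε) * ‖X z‖ ^ 2 + (1 + ε) * ‖Df z‖ ^ 2 := by
      have h := elem_ineq ε hε (Df z).re (Df z).im (X z).re (X z).im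
      simp only [hX_def, hg_def, normsq', Complex.sub_re, Complex.sub_im, Complex.mul_re,
        Complex.mul_im, Complex.ofReal_re, Complex.ofReal_im] at h ⊢
      nlinarith [h]
    have hez : (0:ℝ) ≤ e z := by rw [he_def]; positivity
    calc a z ^ 2 * g z * e z = (a z ^ 2 * g z) * e z := by ring
      _ ≤ ((1 + 1 / ε) * ‖X z‖ ^ 2 + (1 + ε) * ‖Df z‖ ^ 2) * e z :=
          mul_le_mul_of_nonneg_right key hez
      _ = (1 + 1 / ε) * (‖X z‖ ^ 2 * e z) + (1 + ε) * (‖Df z‖ ^ 2 * e z) := by ring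
  have hmono : ∫ z, a z ^ 2 * g z * e z
      ≤ (1 + 1 / ε) * (∫ z, ‖X z‖ ^ 2 * e z) + (1 + ε) * ∫ z, ‖Df z‖ ^ 2 * e z := by
    calc ∫ z, a z ^ 2 * g z * e z
        ≤ ∫ z, ((1 + 1 / ε) * (‖X z‖ ^ 2 * e z) + (1 + ε) * (‖Df z‖ ^ 2 * e z)) :=
          integral_mono int3 ((int1.const_mul _).add (int2.const_mul _)) hpt2
      _ = _ := by
          rw [integral_add (int1.const_mul _) (int2.const_mul _), integral_const_mul, integral_const_mul]
  have hsplit : ∫ z, (a z ^ 2 + (1 + ε) * b z) * ‖f z‖ ^ 2 * e z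
      = (∫ z, a z ^ 2 * g z * e z) + (1 + ε) * ∫ z, b z * g z * e z := by
    rw [show (fun z => (a z ^ 2 + (1 + ε) * b z) * ‖f z‖ ^ 2 * e z)
        = fun z => a z ^ 2 * g z * e z + (1 + ε) * (b z * g z * e z) from funext fun z => by
          simp only [normsq', hg_def]; ring]
    rw [integral_add int3 (int4.const_mul _), integral_const_mul]
  show (∫ z, (a z ^ 2 + (1 + ε) * b z) * ‖f z‖ ^ 2 * e z)
      ≤ (2 + ε + 1 / ε) * ∫ z, ‖X z‖ ^ 2 * e z
  rw [hsplit, hbge]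
  calc (∫ z, a z ^ 2 * g z * e z)
      + (1 + ε) * ((∫ z, ‖X z‖ ^ 2 * e z) - ∫ z, ‖Df z‖ ^ 2 * e z)
      ≤ ((1 + 1 / ε) * (∫ z, ‖X z‖ ^ 2 * e z) + (1 + ε) * ∫ z, ‖Df z‖ ^ 2 * e z)
        + (1 + ε) * ((∫ z, ‖X z‖ ^ 2 * e z) - ∫ z, ‖Df z‖ ^ 2 * e z) := by linarith [hmono]
    _ = (2 + ε + 1 / ε) * ∫ z, ‖X z‖ ^ 2 * e z := by ring

/-- the weighted estimate `∫ Ψ|f|²e^{−φ} ≤ (2+ε+1/ε)Σ(‖X_jf‖² + ‖Y_jf‖²)`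
with `Ψ = |∇φ|² + (1+ε)Δφ`. -/
theorem stmt6 (n : ℕ) (φ : (Fin n → ℂ) → ℝ) (hφ : ContDiff ℝ 2 φ) (ε : ℝ) (hε : 0 < ε)
    (f : (Fin n → ℂ) → ℂ) (hf : ContDiff ℝ (⊤ : ℕ∞) f) (hfc : HasCompactSupport f) :
    ∫ z, (gradsq φ z + (1 + ε) * rlap φ z) * ‖f z‖ ^ 2 * Real.exp (-(φ z)) ≤
      (2 + ε + 1 / ε) * ∑ j, ((∫ z, ‖Xop φ j f z‖ ^ 2 * Real.exp (-(φ z)))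
        + ∫ z, ‖Yop φ j f z‖ ^ 2 * Real.exp (-(φ z))) := by
  have hint : ∀ (v : Fin n → ℂ), Integrable (fun z =>
      ((fderiv ℝ φ z v) ^ 2 + (1 + ε) * fderiv ℝ (fun w => fderiv ℝ φ w v) z v)
        * ‖f z‖ ^ 2 * Real.exp (-(φ z))) := by
    intro v
    have ha1 : ContDiff ℝ 1 (fun z => fderiv ℝ φ z v) :=
      ((ContinuousLinearMap.apply ℝ ℝ v).contDiff).comp (hφ.fderiv_right (by norm_num))
    have hbcont : Continuous (fun z => fderiv ℝ (fun w => fderiv ℝ φ w v) z v) :=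
      ((ContinuousLinearMap.apply ℝ ℝ v).continuous).comp (ha1.continuous_fderiv one_ne_zero)
    apply Continuous.integrable_of_hasCompactSupport
    · exact (((ha1.continuous.pow 2).add (continuous_const.mul hbcont)).mul
        ((hf.continuous.norm).pow 2)).mul (Real.continuous_exp.comp hφ.continuous.neg)
    · apply hfc.mono
      intro z hz
      rw [Function.mem_support] at hz ⊢
      intro h0; apply hz; simp [h0]
  have hLHS : (∫ z, (gradsq φ z + (1 + ε) * rlap φ z) * ‖f z‖ ^ 2 * Real.exp (-(φ z)))
      = ∑ j, ((∫ z, ((fderiv ℝ φ z (dirx n j)) ^ 2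
              + (1 + ε) * fderiv ℝ (fun w => fderiv ℝ φ w (dirx n j)) z (dirx n j))
            * ‖f z‖ ^ 2 * Real.exp (-(φ z)))
          + ∫ z, ((fderiv ℝ φ z (diry n j)) ^ 2
              + (1 + ε) * fderiv ℝ (fun w => fderiv ℝ φ w (diry n j)) z (diry n j))
            * ‖f z‖ ^ 2 * Real.exp (-(φ z))) := by
    rw [show (fun z => (gradsq φ z + (1 + ε) * rlap φ z) * ‖f z‖ ^ 2 * Real.exp (-(φ z)))
        = fun z => ∑ j,
          (((fderiv ℝ φ z (dirx n j)) ^ 2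
              + (1 + ε) * fderiv ℝ (fun w => fderiv ℝ φ w (dirx n j)) z (dirx n j))
            * ‖f z‖ ^ 2 * Real.exp (-(φ z))
          + ((fderiv ℝ φ z (diry n j)) ^ 2
              + (1 + ε) * fderiv ℝ (fun w => fderiv ℝ φ w (diry n j)) z (diry n j))
            * ‖f z‖ ^ 2 * Real.exp (-(φ z))) from funext fun z => by
      simp only [gradsq, rlap, rpdx, rpdy]
      rw [Finset.mul_sum, ← Finset.sum_add_distrib, Finset.sum_mul, Finset.sum_mul]
      exact Finset.sum_congr rfl fun j _ => by ring]
    have hintj : ∀ j : Fin n, Integrable (fun z =>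
        ((fderiv ℝ φ z (dirx n j)) ^ 2
            + (1 + ε) * fderiv ℝ (fun w => fderiv ℝ φ w (dirx n j)) z (dirx n j))
          * ‖f z‖ ^ 2 * Real.exp (-(φ z))
        + ((fderiv ℝ φ z (diry n j)) ^ 2
            + (1 + ε) * fderiv ℝ (fun w => fderiv ℝ φ w (diry n j)) z (diry n j))
          * ‖f z‖ ^ 2 * Real.exp (-(φ z))) :=
      fun j => (hint (dirx n j)).add (hint (diry n j))
    rw [integral_finset_sum _ (fun j _ => hintj j)]
    exact Finset.sum_congr rfl fun j _ => integral_add (hint (dirx n j)) (hint (diry n j))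
  have key_x : ∀ j : Fin n,
      (∫ z, ((fderiv ℝ φ z (dirx n j)) ^ 2
          + (1 + ε) * fderiv ℝ (fun w => fderiv ℝ φ w (dirx n j)) z (dirx n j))
        * ‖f z‖ ^ 2 * Real.exp (-(φ z)))
      ≤ (2 + ε + 1 / ε) * ∫ z, ‖Xop φ j f z‖ ^ 2 * Real.exp (-(φ z)) := fun j => by
    have h := key_dir n φ hφ ε hε f hf hfc (dirx n j)
    simpa only [Xop, pdx, rpdx] using h
  have key_y : ∀ j : Fin n,
      (∫ z, ((fderiv ℝ φ z (diry n j)) ^ 2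
          + (1 + ε) * fderiv ℝ (fun w => fderiv ℝ φ w (diry n j)) z (diry n j))
        * ‖f z‖ ^ 2 * Real.exp (-(φ z)))
      ≤ (2 + ε + 1 / ε) * ∫ z, ‖Yop φ j f z‖ ^ 2 * Real.exp (-(φ z)) := fun j => by
    have h := key_dir n φ hφ ε hε f hf hfc (diry n j)
    simpa only [Yop, pdy, rpdy] using h
  rw [hLHS]
  calc _ ≤ ∑ j : Fin n, ((2 + ε + 1 / ε) * (∫ z, ‖Xop φ j f z‖ ^ 2 * Real.exp (-(φ z)))
        + (2 + ε + 1 / ε) * ∫ z, ‖Yop φ j f z‖ ^ 2 * Real.exp (-(φ z))) :=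
      Finset.sum_le_sum fun j _ => add_le_add (key_x j) (key_y j)
    _ = _ := by
      rw [Finset.mul_sum]
      exact Finset.sum_congr rfl fun j _ => (mul_add _ _ _).symm
end
end
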